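/- Let $a < b$ and $a_0, b_0, c_1, c_2 \in \mathbb{R}$, and let $\hat u : \mathbb{R} \to \mathbb{R}$ be continuously differentiable. Define $$u(x) = e^{2x/(a-b)} (x-a)^2 \big( (x-b)^2 \hat u(x) + c_2 \big) + c_1 + \frac{b_0-a_0}{2(b-a)}(x-a)^2 + a_0 x.$$ Then $u'(a) = a_0$ and $u'(b) = b_0$. -/

import Mathlib

/-!
Write `u = w · q + c₁ + k (x - a)² + a₀ x` with `w x = exp (2x/(a-b)) (x - a)²`,
`q x = (x - b)² û x + c₂` and `k = (b₀ - a₀)/(2(b - a))`. Both `w` and `q` vanish to first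
order where their squared factor does, and the exponent `2/(a - b)` is chosen exactly so that
`w' = w · (2/(a - b) + 2/(x - a))` also vanishes at `b`. So `w · q` is stationary at `a` and
at `b`, and the derivative of `u` there is that of the quadratic `k (x - a)² + a₀ x`, namely
`a₀` and `2k(b - a) + a₀ = b₀`.
-/

open Real

section

variable {𝕜 : Type*} [NontriviallyNormedField 𝕜]

theorem hasDerivAt_sub_sq (a x : 𝕜) : HasDerivAt (fun y => (y - a) ^ 2) (2 * (x - a)) x := by
  simpa [mul_comm] using ((hasDerivAt_id x).sub_const a).fun_pow 2

theorem HasDerivAt.mul_of_eq_zero {f g : 𝕜 → 𝕜} {x : 𝕜} (hf : HasDerivAt f 0 x) (hfx : f x = 0)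
    (hg : DifferentiableAt 𝕜 g x) : HasDerivAt (fun y => f y * g y) 0 x := by
  simpa [hfx] using hf.fun_mul hg.hasDerivAt

theorem hasDerivAt_sub_sq_mul {g : 𝕜 → 𝕜} {a : 𝕜} (hg : DifferentiableAt 𝕜 g a) :
    HasDerivAt (fun y => (y - a) ^ 2 * g y) 0 a :=
  HasDerivAt.mul_of_eq_zero (by simpa using hasDerivAt_sub_sq a a) (by simp) hg

end

theorem hasDerivAt_exp_mul_sub_sq {a b : ℝ} (hab : a ≠ b) :
    HasDerivAt (fun x => exp (2 * x / (a - b)) * (x - a) ^ 2) 0 b := by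
  have hlin : HasDerivAt (fun x : ℝ => 2 * x / (a - b)) (2 / (a - b)) b := by
    simpa using ((hasDerivAt_id b).const_mul 2).div_const (a - b)
  refine (hlin.exp.fun_mul (hasDerivAt_sub_sq a b)).congr_deriv ?_
  have hslope : 2 / (a - b) * (b - a) ^ 2 = -(2 * (b - a)) := by
    field_simp [sub_ne_zero.2 hab]
    ring
  linear_combination exp (2 * b / (a - b)) * hslope

theorem stmt_6 (a b a0 b0 c1 c2 : ℝ) (hab : a < b)
    (uhat : ℝ → ℝ) (hu : ContDiff ℝ 1 uhat) (u : ℝ → ℝ)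
    (hdef : ∀ x, u x = Real.exp (2 * x / (a - b)) * (x - a) ^ 2 * ((x - b) ^ 2 * uhat x + c2)
      + c1 + (b0 - a0) / (2 * (b - a)) * (x - a) ^ 2 + a0 * x) :
    deriv u a = a0 ∧ deriv u b = b0 := by
  have hu' : Differentiable ℝ uhat := hu.differentiable one_ne_zero
  set k := (b0 - a0) / (2 * (b - a)) with hk
  set wq : ℝ → ℝ := fun x => exp (2 * x / (a - b)) * (x - a) ^ 2 * ((x - b) ^ 2 * uhat x + c2)
  have deriv_u : ∀ x, HasDerivAt wq 0 x → deriv u x = k * (2 * (x - a)) + a0 := fun x hw => by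
    rw [show u = fun x => wq x + c1 + k * (x - a) ^ 2 + a0 * x from funext hdef]
    simpa using (((hw.add_const c1).fun_add ((hasDerivAt_sub_sq a x).const_mul k)).fun_add
      ((hasDerivAt_id x).const_mul a0)).deriv
  constructor
  · have hw : HasDerivAt wq 0 a := by
      have hw_eq : wq = fun x =>
          (x - a) ^ 2 * (exp (2 * x / (a - b)) * ((x - b) ^ 2 * uhat x + c2)) := by
        funext x
        simp only [wq]
        ring
      have hua := hu' a
      rw [hw_eq]
      exact hasDerivAt_sub_sq_mul (by fun_prop)
    simp [deriv_u a hw]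
  · have hw : HasDerivAt wq 0 b := by
      simpa using (hasDerivAt_exp_mul_sub_sq hab.ne).fun_mul
        ((hasDerivAt_sub_sq_mul (hu' b)).add_const c2)
    rw [deriv_u b hw, hk]
    field_simp [sub_ne_zero.2 hab.ne']
    ring
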